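/- arXiv:math/0601190 — 6 statements merged into one kernel-verified Lean document; each statement's English description precedes it below -/
import Mathlib

section
/- Under the additional completeness hypotheses on the discrete system, the orthogonal family F_n := Σ_{k=0}^∞ u_k · R k n · p_k has dense linear span in L²(μ); that is, the system (F_n) is complete in L²(μ). (Completeness part of Theorem A.) -/
open MeasureTheory Submodule
open scoped lp ComplexConjugate

/-! Let `A k n = u k * R k n`. Through the Hilbert basis `(p k)`, `F n` corresponds to the column
`(A k n)_k`, which lies in `ℓ²` by the dual relation. If `c ∈ ℓ²` is orthogonal to every column,
then `∑_k c k * (√ρ n * conj (A k n)) = 0` for every `n`. Since `|u k| = 1`, the orthogonality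
relation says that the weighted conjugate rows `r k = (√ρ n * conj (A k n))_n` are orthonormal in
`ℓ²`, so `c ↦ ∑_k c k • r k` is an isometry, and it sends `c` to `0`; hence `c = 0`. -/

section
variable {𝕜 ι κ : Type*} [RCLike 𝕜]

theorem memℓp_two_of_hasSum_mul_conj {z : ι → 𝕜} {t : 𝕜}
    (h : HasSum (fun k => z k * conj (z k)) t) : Memℓp z 2 := by
  refine memℓp_gen ?_
  simp only [RCLike.mul_conj, ← RCLike.ofReal_pow] at h
  simpa using (RCLike.summable_ofReal 𝕜).1 h.summable

theorem unit_mul_mul_conj_unit_mul {u : 𝕜} (hu : ‖u‖ = 1) (a b : 𝕜) :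
    u * a * conj (u * b) = a * conj b := by
  have hu' : u * conj u = 1 := by simp [RCLike.mul_conj, hu]
  rw [map_mul]
  linear_combination a * conj b * hu'

theorem hasSum_weight_mul_unit_mul [DecidableEq ι] {u : ι → 𝕜} {w : κ → 𝕜} {R : ι → κ → 𝕜}
    (hu : ∀ k, ‖u k‖ = 1)
    (horth : ∀ n m, HasSum (fun j => w j * R n j * conj (R m j)) (if n = m then 1 else 0))
    (n m : ι) :
    HasSum (fun j => w j * (u n * R n j) * conj (u m * R m j)) (if n = m then 1 else 0) := by
  have h := (horth n m).mul_left (u n * conj (u m))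
  have hval : u n * conj (u m) * (if n = m then 1 else 0) = if n = m then 1 else 0 := by
    split_ifs with hnm
    · simp [hnm, RCLike.mul_conj, hu]
    · rw [mul_zero]
  rw [hval] at h
  refine h.congr_fun fun j => ?_
  rw [map_mul]
  ring

theorem Orthonormal.eq_zero_of_hasSum_mul_apply {r : ι → ℓ²(κ, 𝕜)} (hr : Orthonormal 𝕜 r)
    {c : ℓ²(ι, 𝕜)} (hc : ∀ n, HasSum (fun k => c k * r k n) 0) : c = 0 := by
  set T := hr.orthogonalFamily.linearIsometry
  have hT : ∀ n, HasSum (fun k => c k * r k n) (T c n) := fun n =>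
    (hr.orthogonalFamily.hasSum_linearIsometry c).mapL (lp.evalCLM 𝕜 _ 2 n)
  have hTc : T c = 0 := lp.ext (funext fun n => (hT n).unique (hc n))
  exact T.injective (hTc.trans T.map_zero.symm)

theorem HilbertBasis.topologicalClosure_span_repr_symm_eq_top {E : Type*}
    [NormedAddCommGroup E] [InnerProductSpace 𝕜 E] [CompleteSpace E]
    (b : HilbertBasis ι 𝕜 E) {v : κ → ℓ²(ι, 𝕜)}
    (hv : ∀ c : ℓ²(ι, 𝕜), (∀ n, inner 𝕜 (v n) c = 0) → c = 0) :
    (span 𝕜 (Set.range fun n => b.repr.symm (v n))).topologicalClosure = ⊤ := by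
  rw [topologicalClosure_eq_top_iff, eq_bot_iff]
  intro f hf
  have hrepr : b.repr f = 0 := hv _ fun n => by
    rw [← b.repr.apply_symm_apply (v n), b.repr.inner_map_map]
    exact (mem_orthogonal _ _).1 hf _ (subset_span ⟨n, rfl⟩)
  simpa using hrepr

theorem exists_orthonormal_sqrt_mul_conj_rows {ρ : κ → ℝ} {R : ι → κ → 𝕜} [DecidableEq ι]
    (hρ : ∀ j, 0 ≤ ρ j)
    (horth : ∀ n m, HasSum (fun j => (ρ j : 𝕜) * R n j * conj (R m j)) (if n = m then 1 else 0)) :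
    ∃ r : ι → ℓ²(κ, 𝕜), Orthonormal 𝕜 r ∧ ∀ k j, r k j = (√(ρ j) : 𝕜) * conj (R k j) := by
  have key : ∀ j a b, conj ((√(ρ j) : 𝕜) * conj a) * ((√(ρ j) : 𝕜) * conj b) =
      ρ j * a * conj b := by
    intro j a b
    have hsq : (√(ρ j) : 𝕜) * √(ρ j) = ρ j := by
      rw [← RCLike.ofReal_mul, Real.mul_self_sqrt (hρ j)]
    rw [map_mul, RCLike.conj_ofReal, RCLike.conj_conj]
    linear_combination a * conj b * hsq
  have hmem : ∀ k, Memℓp (fun j => (√(ρ j) : 𝕜) * conj (R k j)) 2 := fun k => by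
    refine memℓp_two_of_hasSum_mul_conj ((horth k k).congr_fun fun j => ?_)
    rw [mul_comm, key]
  refine ⟨fun k => ⟨_, hmem k⟩, ?_, fun _ _ => rfl⟩
  rw [orthonormal_iff_ite]
  intro k l
  refine (lp.hasSum_inner _ _).unique ?_
  simpa only [RCLike.inner_apply', key] using horth k l

theorem eq_zero_of_forall_inner_column_eq_zero {ρ : κ → ℝ} {R : ι → κ → 𝕜} [DecidableEq ι]
    (hρ : ∀ j, 0 ≤ ρ j)
    (horth : ∀ n m, HasSum (fun j => (ρ j : 𝕜) * R n j * conj (R m j)) (if n = m then 1 else 0))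
    {v : κ → ℓ²(ι, 𝕜)} (hv : ∀ n k, v n k = R k n) {c : ℓ²(ι, 𝕜)}
    (hc : ∀ n, inner 𝕜 (v n) c = 0) : c = 0 := by
  obtain ⟨r, hr, hr_apply⟩ := exists_orthonormal_sqrt_mul_conj_rows hρ horth
  refine hr.eq_zero_of_hasSum_mul_apply fun n => ?_
  have h := (lp.hasSum_inner (v n) c).mul_left (√(ρ n) : 𝕜)
  rw [hc, mul_zero] at h
  refine h.congr_fun fun k => ?_
  rw [hr_apply, RCLike.inner_apply', hv]
  ring

end

theorem fourier_type_system_complete_general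
    {m : MeasurableSpace ℝ} (μ : Measure ℝ)
    (p : ℕ → Lp ℂ 2 μ)
    (hp_orth : Orthonormal ℂ p)
    (hp_complete : (Submodule.span ℂ (Set.range p)).topologicalClosure = ⊤)
    (u : ℕ → ℂ) (hu : ∀ k, ‖u k‖ = 1)
    (ρ : ℕ → ℝ) (hρ : ∀ n, 0 < ρ n)
    (R : ℕ → ℕ → ℂ)
    (hdual : ∀ n m', HasSum (fun k => R k n * (starRingEnd ℂ) (R k m'))
      (if n = m' then 1 / (ρ n : ℂ) else 0))
    (horth : ∀ n m', HasSum (fun j => (ρ j : ℂ) * R n j * (starRingEnd ℂ) (R m' j))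
      (if n = m' then 1 else 0)) :
    ∃ F : ℕ → Lp ℂ 2 μ,
      (∀ n, HasSum (fun k => (u k * R k n) • p k) (F n)) ∧
      (Submodule.span ℂ (Set.range F)).topologicalClosure = ⊤ := by
  have hcol : ∀ n, Memℓp (fun k => u k * R k n) 2 := fun n =>
    memℓp_two_of_hasSum_mul_conj (by simpa only [unit_mul_mul_conj_unit_mul (hu _)] using hdual n n)
  let v : ℕ → ℓ²(ℕ, ℂ) := fun n => ⟨fun k => u k * R k n, hcol n⟩
  let b := HilbertBasis.mk hp_orth hp_complete.ge
  refine ⟨fun n => b.repr.symm (v n), fun n => ?_,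
    b.topologicalClosure_span_repr_symm_eq_top fun c hc => ?_⟩
  · rw [← HilbertBasis.coe_mk hp_orth hp_complete.ge]
    exact b.hasSum_repr_symm (v n)
  · exact eq_zero_of_forall_inner_column_eq_zero (fun n => (hρ n).le)
      (hasSum_weight_mul_unit_mul hu horth) (fun _ _ => rfl) hc

/-- **Completeness part of Theorem A** (Ismail).
Under the dual orthogonality, the orthogonality relation
`Σ_j ρ_j ⬝ R n j ⬝ conj (R m j) = δ_{nm}`, and completeness of the rows
`(R n ·)` in the weighted sequence space `ℓ²(ρ)` (expressed via the triviality
of the orthogonal complement), the family `F_n = Σ_k u_k ⬝ R k n ⬝ p_k` has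
dense linear span in `L²(μ)`. -/
theorem fourier_type_system_complete
    {m : MeasurableSpace ℝ} (μ : Measure ℝ)
    [TopologicalSpace.SeparableSpace (Lp ℂ 2 μ)]
    (p : ℕ → Lp ℂ 2 μ)
    (hp_orth : Orthonormal ℂ p)
    (hp_complete : (Submodule.span ℂ (Set.range p)).topologicalClosure = ⊤)
    (hp_real : ∀ k, ∀ᵐ x ∂μ, ((p k : ℝ →ₘ[μ] ℂ) x).im = 0)
    (u : ℕ → ℂ) (hu : ∀ k, ‖u k‖ = 1)
    (x : ℕ → ℝ) (hx : Function.Injective x)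
    (ρ : ℕ → ℝ) (hρ : ∀ n, 0 < ρ n)
    (R : ℕ → ℕ → ℂ)
    (hdual : ∀ n m', HasSum (fun k => R k n * (starRingEnd ℂ) (R k m'))
      (if n = m' then 1 / (ρ n : ℂ) else 0))
    (horth : ∀ n m', HasSum (fun j => (ρ j : ℂ) * R n j * (starRingEnd ℂ) (R m' j))
      (if n = m' then 1 else 0))
    (hRcomplete : ∀ g : ℕ → ℂ, Summable (fun j => ρ j * ‖g j‖ ^ 2) →
      (∀ n, HasSum (fun j => (ρ j : ℂ) * R n j * (starRingEnd ℂ) (g j)) 0) → g = 0) :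
    ∃ F : ℕ → Lp ℂ 2 μ,
      (∀ n, HasSum (fun k => (u k * R k n) • p k) (F n)) ∧
      (Submodule.span ℂ (Set.range F)).topologicalClosure = ⊤ :=
  fourier_type_system_complete_general (m := m) μ p hp_orth hp_complete u hu ρ hρ R hdual horth
end

section
/- For every t ∈ ℝ the series K(·,t) := Σ_{k=0}^∞ u_k · (𝒥 k t) · p_k converges in L²(μ), and for every n one has K(·, x_n) = λ_n · F_n in L²(μ), where F_n := Σ_{k=0}^∞ u_k · R k n · p_k. (Theorem 1: existence of a kernel interpolating the orthogonal system at the nodes.) -/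
open MeasureTheory

section Orthonormal

variable {𝕜 E ι : Type*} [RCLike 𝕜] [NormedAddCommGroup E] [InnerProductSpace 𝕜 E]
  [CompleteSpace E] {v : ι → E}

theorem Orthonormal.summable_smul_iff (hv : Orthonormal 𝕜 v) (c : ι → 𝕜) :
    (Summable fun i => c i • v i) ↔ Summable fun i => ‖c i‖ ^ 2 := by
  simpa [LinearIsometry.toSpanSingleton_apply] using
    hv.orthogonalFamily.summable_iff_norm_sq_summable c

theorem Orthonormal.summable_unimodular_mul_smul (hv : Orthonormal 𝕜 v) {u c : ι → 𝕜}
    (hu : ∀ i, ‖u i‖ = 1) (hc : Summable fun i => ‖c i‖ ^ 2) :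
    Summable fun i => (u i * c i) • v i := by
  rw [hv.summable_smul_iff]
  simpa only [norm_mul, hu, one_mul] using hc

end Orthonormal

theorem RCLike.summable_mul_conj_iff {𝕜 ι : Type*} [RCLike 𝕜] {c : ι → 𝕜} :
    (Summable fun i => c i * starRingEnd 𝕜 (c i)) ↔ Summable fun i => ‖c i‖ ^ 2 := by
  simp only [RCLike.mul_conj, ← RCLike.ofReal_pow, RCLike.summable_ofReal]

theorem kernel_exists_interpolating_general
    {m : MeasurableSpace ℝ} (μ : Measure ℝ)
    (p : ℕ → Lp ℂ 2 μ)
    (hp_orth : Orthonormal ℂ p)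
    (u : ℕ → ℂ) (hu : ∀ k, ‖u k‖ = 1)
    (x : ℕ → ℝ)
    (ρ : ℕ → ℝ)
    (R : ℕ → ℕ → ℂ)
    (hdual : ∀ n m', HasSum (fun k => R k n * (starRingEnd ℂ) (R k m'))
      (if n = m' then 1 / (ρ n : ℂ) else 0))
    (𝒥 : ℕ → ℝ → ℂ) (h𝒥 : ∀ t : ℝ, Summable (fun k => ‖𝒥 k t‖ ^ 2))
    (lam : ℕ → ℂ)
    (hinterp : ∀ k n, 𝒥 k (x n) = lam n * R k n) :
    ∃ (K : ℝ → Lp ℂ 2 μ) (F : ℕ → Lp ℂ 2 μ),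
      (∀ t : ℝ, HasSum (fun k => (u k * 𝒥 k t) • p k) (K t)) ∧
      (∀ n, HasSum (fun k => (u k * R k n) • p k) (F n)) ∧
      (∀ n, K (x n) = lam n • F n) := by
  have hK (t : ℝ) : Summable fun k => (u k * 𝒥 k t) • p k :=
    hp_orth.summable_unimodular_mul_smul hu (h𝒥 t)
  -- the diagonal `n = m'` of the dual orthogonality relation makes each column of `R` square-summable
  have hF (n : ℕ) : Summable fun k => (u k * R k n) • p k :=
    hp_orth.summable_unimodular_mul_smul hu
      (RCLike.summable_mul_conj_iff.mp (hdual n n).summable)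
  refine ⟨fun t => ∑' k, (u k * 𝒥 k t) • p k, fun n => ∑' k, (u k * R k n) • p k,
    fun t => (hK t).hasSum, fun n => (hF n).hasSum, fun n => ?_⟩
  calc ∑' k, (u k * 𝒥 k (x n)) • p k = ∑' k, lam n • (u k * R k n) • p k := by
        simp only [hinterp, smul_smul, mul_left_comm]
    _ = lam n • ∑' k, (u k * R k n) • p k := (hF n).tsum_const_smul (lam n)

/-- **Theorem 1** of the paper: given functions `𝒥 k` which are square-summable in `k`
for every real `t` and interpolate the discrete orthonormal system `R` at the mass
points, i.e. `𝒥 k (x n) = λ n ⬝ R k n`, the series `K(·,t) = Σ_k u_k ⬝ 𝒥 k t ⬝ p_k`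
converges in `L²(μ)` for every `t`, and `K(·, x_n) = λ_n ⬝ F_n` where
`F_n = Σ_k u_k ⬝ R k n ⬝ p_k`. -/
theorem kernel_exists_interpolating
    {m : MeasurableSpace ℝ} (μ : Measure ℝ)
    [TopologicalSpace.SeparableSpace (Lp ℂ 2 μ)]
    (p : ℕ → Lp ℂ 2 μ)
    (hp_orth : Orthonormal ℂ p)
    (hp_complete : (Submodule.span ℂ (Set.range p)).topologicalClosure = ⊤)
    (hp_real : ∀ k, ∀ᵐ x ∂μ, ((p k : ℝ →ₘ[μ] ℂ) x).im = 0)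
    (u : ℕ → ℂ) (hu : ∀ k, ‖u k‖ = 1)
    (x : ℕ → ℝ) (hx : Function.Injective x)
    (ρ : ℕ → ℝ) (hρ : ∀ n, 0 < ρ n)
    (R : ℕ → ℕ → ℂ)
    (hdual : ∀ n m', HasSum (fun k => R k n * (starRingEnd ℂ) (R k m'))
      (if n = m' then 1 / (ρ n : ℂ) else 0))
    (𝒥 : ℕ → ℝ → ℂ) (h𝒥 : ∀ t : ℝ, Summable (fun k => ‖𝒥 k t‖ ^ 2))
    (lam : ℕ → ℂ) (hlam : ∀ n, lam n ≠ 0)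
    (hinterp : ∀ k n, 𝒥 k (x n) = lam n * R k n) :
    ∃ (K : ℝ → Lp ℂ 2 μ) (F : ℕ → Lp ℂ 2 μ),
      (∀ t : ℝ, HasSum (fun k => (u k * 𝒥 k t) • p k) (K t)) ∧
      (∀ n, HasSum (fun k => (u k * R k n) • p k) (F n)) ∧
      (∀ n, K (x n) = lam n • F n) :=
  kernel_exists_interpolating_general (m := m) μ p hp_orth u hu x ρ R hdual 𝒥 h𝒥 lam hinterp
end

section
/- The family (K(·, x_n))_{n∈ℕ}, where K(·,t) := Σ_{k=0}^∞ u_k · (𝒥 k t) · p_k, is an orthogonal basis of L²(μ): each K(·,x_n) is nonzero, ⟨K(·,x_n), K(·,x_m)⟩_{L²(μ)} = 0 for n ≠ m, and the linear span of {K(·,x_n) : n ∈ ℕ} is dense in L²(μ). -/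
open MeasureTheory

/-!
Write `N k n = √ρₙ uₖ R k n`. Since `|uₖ| = 1`, the dual orthogonality relation says that the
columns of `N` are orthonormal and the orthogonality relation says that its rows are. As
`𝒥 k (xₙ) = λₙ R k n`, the rescaled kernel `(√ρₙ / λₙ) K(·, xₙ)` has coordinates `N · n` in the
orthonormal basis `(pₖ)`, so these vectors are orthonormal. Orthonormality of the rows puts every
`pₖ = Σₙ conj (N k n) (√ρₙ / λₙ) K(·, xₙ)` in their closed span.
-/

open Submodule ComplexConjugate

section OrthonormalExpansion

variable {ι κ E : Type*} [NormedAddCommGroup E] [InnerProductSpace ℂ E] {v : ι → E}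

theorem Orthonormal.summable_smul [CompleteSpace E] (hv : Orthonormal ℂ v) {a : ι → ℂ}
    (ha : Summable fun i => ‖a i‖ ^ 2) : Summable fun i => a i • v i := by
  simpa only [LinearIsometry.toSpanSingleton_apply] using
    (hv.orthogonalFamily.summable_iff_norm_sq_summable a).2 ha

theorem Orthonormal.inner_eq_of_hasSum (hv : Orthonormal ℂ v) {a : ι → ℂ} {x : E}
    (hx : HasSum (fun j => a j • v j) x) (i : ι) : inner ℂ (v i) x = a i := by
  classical
  have h := (innerSL ℂ (v i)).hasSum hx
  simp only [innerSL_apply_apply, inner_smul_right, orthonormal_iff_ite.mp hv, mul_ite, mul_one,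
    mul_zero] at h
  rw [h.unique (hasSum_single i fun j hj => if_neg (Ne.symm hj)), if_pos rfl]

theorem Orthonormal.hasSum_inner_of_hasSum (hv : Orthonormal ℂ v) {a b : ι → ℂ} {x y : E}
    (hx : HasSum (fun i => a i • v i) x) (hy : HasSum (fun i => b i • v i) y) :
    HasSum (fun i => conj (a i) * b i) (inner ℂ x y) := by
  have h := Complex.hasSum_conj'.mpr ((innerSL ℂ y).hasSum hx)
  simp only [innerSL_apply_apply, inner_smul_right, map_mul,
    inner_conj_symm, hv.inner_eq_of_hasSum hy] at h
  simpa only [mul_comm] using h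

theorem Orthonormal.eq_of_inner_eq [CompleteSpace E] (hv : Orthonormal ℂ v)
    (hv_top : (span ℂ (Set.range v)).topologicalClosure = ⊤) {x y : E}
    (h : ∀ i, inner ℂ (v i) x = inner ℂ (v i) y) : x = y := by
  let b := HilbertBasis.mk hv hv_top.ge
  have hb : ⇑b = v := HilbertBasis.coe_mk hv _
  refine b.repr.injective (lp.ext (funext fun i => ?_))
  simp only [b.repr_apply_apply, hb, h]

variable {f : κ → E} {N : ι → κ → ℂ}

theorem Orthonormal.orthonormal_of_hasSum [DecidableEq κ] (hv : Orthonormal ℂ v)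
    (hf : ∀ n, HasSum (fun i => N i n • v i) (f n))
    (hcol : ∀ n m, HasSum (fun i => conj (N i n) * N i m) (if n = m then 1 else 0)) :
    Orthonormal ℂ f := orthonormal_iff_ite.mpr fun n m =>
    (hv.hasSum_inner_of_hasSum (hf n) (hf m)).unique (hcol n m)

theorem Orthonormal.topologicalClosure_span_eq_top_of_hasSum [CompleteSpace E] [DecidableEq ι]
    (hv : Orthonormal ℂ v) (hv_top : (span ℂ (Set.range v)).topologicalClosure = ⊤)
    (hf_orth : Orthonormal ℂ f) (hf : ∀ n, HasSum (fun i => N i n • v i) (f n))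
    (hrow : ∀ i j, HasSum (fun n => N i n * conj (N j n)) (if i = j then 1 else 0)) :
    (span ℂ (Set.range f)).topologicalClosure = ⊤ := by
  refine eq_top_iff.mpr (hv_top.ge.trans (topologicalClosure_minimal _ ?_
    (isClosed_topologicalClosure _)))
  rw [span_le]
  rintro _ ⟨i, rfl⟩
  have hsq : Summable fun n => ‖conj (N i n)‖ ^ 2 := by
    simpa only [RCLike.norm_conj, Complex.mul_conj', ← Complex.ofReal_pow,
      Complex.summable_ofReal] using (hrow i i).summable
  obtain ⟨S, hS⟩ := hf_orth.summable_smul hsq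
  have hS_mem : S ∈ (span ℂ (Set.range f)).topologicalClosure :=
    (isClosed_topologicalClosure _).mem_of_tendsto hS (Filter.Eventually.of_forall fun s =>
      sum_mem fun n _ => smul_mem _ _ (le_topologicalClosure _ (subset_span ⟨n, rfl⟩)))
  suffices hS_eq : v i = S from hS_eq ▸ hS_mem
  refine hv.eq_of_inner_eq hv_top fun j => ?_
  have h := (innerSL ℂ (v j)).hasSum hS
  simp only [innerSL_apply_apply, inner_smul_right, hv.inner_eq_of_hasSum (hf _)] at h
  rw [orthonormal_iff_ite.mp hv, h.unique (by simpa only [mul_comm] using hrow j i)]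

end OrthonormalExpansion

section NormalizedMatrix

variable {ι κ : Type*}

noncomputable def normalizedMatrix (u : ι → ℂ) (ρ : κ → ℝ) (R : ι → κ → ℂ) (k : ι) (n : κ) : ℂ :=
  (√(ρ n) : ℂ) * u k * R k n

variable {u : ι → ℂ} {ρ : κ → ℝ} {R : ι → κ → ℂ}

theorem conj_mul_self_of_norm_eq_one {z : ℂ} (hz : ‖z‖ = 1) : conj z * z = 1 := by
  simp [Complex.conj_mul', hz]

theorem hasSum_conj_normalizedMatrix_mul [DecidableEq κ] (hu : ∀ k, ‖u k‖ = 1) (hρ : ∀ n, 0 < ρ n)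
    (hdual : ∀ n m, HasSum (fun k => R k n * conj (R k m)) (if n = m then 1 / (ρ n : ℂ) else 0))
    (n m : κ) :
    HasSum (fun k => conj (normalizedMatrix u ρ R k n) * normalizedMatrix u ρ R k m)
      (if n = m then 1 else 0) := by
  have h := (Complex.hasSum_conj'.mpr (hdual n m)).mul_left ((√(ρ n) : ℂ) * √(ρ m))
  have hval : (√(ρ n) : ℂ) * √(ρ m) * conj (if n = m then 1 / (ρ n : ℂ) else 0) =
      if n = m then 1 else 0 := by
    split_ifs with hnm
    · subst hnm
      rw [map_div₀, map_one, Complex.conj_ofReal, ← Complex.ofReal_mul,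
        Real.mul_self_sqrt (hρ n).le, mul_one_div_cancel (Complex.ofReal_ne_zero.mpr (hρ n).ne')]
    · rw [map_zero, mul_zero]
  rw [hval] at h
  refine h.congr_fun fun k => ?_
  simp only [normalizedMatrix, map_mul, Complex.conj_ofReal, Complex.conj_conj]
  linear_combination (√(ρ n) : ℂ) * √(ρ m) * conj (R k n) * R k m *
    conj_mul_self_of_norm_eq_one (hu k)

theorem hasSum_normalizedMatrix_mul_conj [DecidableEq ι] (hu : ∀ k, ‖u k‖ = 1) (hρ : ∀ n, 0 ≤ ρ n)
    (horth : ∀ i j, HasSum (fun n => (ρ n : ℂ) * R i n * conj (R j n)) (if i = j then 1 else 0))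
    (i j : ι) :
    HasSum (fun n => normalizedMatrix u ρ R i n * conj (normalizedMatrix u ρ R j n))
      (if i = j then 1 else 0) := by
  have h := (horth i j).mul_left (conj (u j) * u i)
  have hval : conj (u j) * u i * (if i = j then 1 else 0) = if i = j then 1 else 0 := by
    split_ifs with hij
    · rw [hij, conj_mul_self_of_norm_eq_one (hu j), mul_one]
    · rw [mul_zero]
  rw [hval] at h
  refine h.congr_fun fun n => ?_
  have hsqrt : (√(ρ n) : ℂ) * √(ρ n) = ρ n := by
    rw [← Complex.ofReal_mul, Real.mul_self_sqrt (hρ n)]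
  simp only [normalizedMatrix, map_mul, Complex.conj_ofReal]
  linear_combination conj (u j) * u i * R i n * conj (R j n) * hsqrt

end NormalizedMatrix

theorem kernel_at_nodes_orthogonal_basis_general
    {m : MeasurableSpace ℝ} (μ : Measure ℝ)
    (p : ℕ → Lp ℂ 2 μ)
    (hp_orth : Orthonormal ℂ p)
    (hp_complete : (Submodule.span ℂ (Set.range p)).topologicalClosure = ⊤)
    (u : ℕ → ℂ) (hu : ∀ k, ‖u k‖ = 1)
    (x : ℕ → ℝ)
    (ρ : ℕ → ℝ) (hρ : ∀ n, 0 < ρ n)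
    (R : ℕ → ℕ → ℂ)
    (hdual : ∀ n m', HasSum (fun k => R k n * (starRingEnd ℂ) (R k m'))
      (if n = m' then 1 / (ρ n : ℂ) else 0))
    (horth : ∀ n m', HasSum (fun j => (ρ j : ℂ) * R n j * (starRingEnd ℂ) (R m' j))
      (if n = m' then 1 else 0))
    (𝒥 : ℕ → ℝ → ℂ) (h𝒥 : ∀ t : ℝ, Summable (fun k => ‖𝒥 k t‖ ^ 2))
    (lam : ℕ → ℂ) (hlam : ∀ n, lam n ≠ 0)
    (hinterp : ∀ k n, 𝒥 k (x n) = lam n * R k n) :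
    ∃ K : ℝ → Lp ℂ 2 μ,
      (∀ t : ℝ, HasSum (fun k => (u k * 𝒥 k t) • p k) (K t)) ∧
      (∀ n, K (x n) ≠ 0) ∧
      (∀ n m', n ≠ m' → (inner ℂ (K (x n)) (K (x m')) : ℂ) = 0) ∧
      (Submodule.span ℂ (Set.range fun n => K (x n))).topologicalClosure = ⊤ := by
  have hK (t : ℝ) : Summable fun k => (u k * 𝒥 k t) • p k :=
    hp_orth.summable_smul (by simpa only [norm_mul, hu, one_mul] using h𝒥 t)
  set K : ℝ → Lp ℂ 2 μ := fun t => ∑' k, (u k * 𝒥 k t) • p k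
  set c : ℕ → ℂ := fun n => (√(ρ n) : ℂ) / lam n
  have hc (n : ℕ) : c n ≠ 0 :=
    div_ne_zero (Complex.ofReal_ne_zero.mpr (Real.sqrt_pos.mpr (hρ n)).ne') (hlam n)
  have hcK (n : ℕ) : HasSum (fun k => normalizedMatrix u ρ R k n • p k) (c n • K (x n)) := by
    convert (hK (x n)).hasSum.const_smul (c n) using 2 with k
    rw [smul_smul, hinterp, normalizedMatrix]
    congr 1
    simp only [c]
    field_simp [hlam n]
  have hcK_orth : Orthonormal ℂ fun n => c n • K (x n) :=
    hp_orth.orthonormal_of_hasSum hcK (hasSum_conj_normalizedMatrix_mul hu hρ hdual)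
  refine ⟨K, fun t => (hK t).hasSum, fun n => right_ne_zero_of_smul (hcK_orth.ne_zero n),
    fun n m' hnm => ?_, ?_⟩
  · have h := hcK_orth.2 hnm
    simpa only [inner_smul_left, inner_smul_right, mul_eq_zero, map_eq_zero, hc, false_or] using h
  · have h := hp_orth.topologicalClosure_span_eq_top_of_hasSum hp_complete hcK_orth hcK
      (hasSum_normalizedMatrix_mul_conj hu (fun n => (hρ n).le) horth)
    refine eq_top_iff.mpr (h.ge.trans (topologicalClosure_mono (span_le.mpr ?_)))
    rintro _ ⟨n, rfl⟩
    exact smul_mem _ _ (subset_span ⟨n, rfl⟩)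

/-- The family `(K(·, x_n))_n`, where `K(·,t) = Σ_k u_k ⬝ 𝒥 k t ⬝ p_k`, is an
orthogonal basis of `L²(μ)`: every `K(·,x_n)` is nonzero, distinct members are
orthogonal, and their linear span is dense in `L²(μ)`. -/
theorem kernel_at_nodes_orthogonal_basis
    {m : MeasurableSpace ℝ} (μ : Measure ℝ)
    [TopologicalSpace.SeparableSpace (Lp ℂ 2 μ)]
    (p : ℕ → Lp ℂ 2 μ)
    (hp_orth : Orthonormal ℂ p)
    (hp_complete : (Submodule.span ℂ (Set.range p)).topologicalClosure = ⊤)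
    (hp_real : ∀ k, ∀ᵐ x ∂μ, ((p k : ℝ →ₘ[μ] ℂ) x).im = 0)
    (u : ℕ → ℂ) (hu : ∀ k, ‖u k‖ = 1)
    (x : ℕ → ℝ) (hx : Function.Injective x)
    (ρ : ℕ → ℝ) (hρ : ∀ n, 0 < ρ n)
    (R : ℕ → ℕ → ℂ)
    (hdual : ∀ n m', HasSum (fun k => R k n * (starRingEnd ℂ) (R k m'))
      (if n = m' then 1 / (ρ n : ℂ) else 0))
    (horth : ∀ n m', HasSum (fun j => (ρ j : ℂ) * R n j * (starRingEnd ℂ) (R m' j))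
      (if n = m' then 1 else 0))
    (hRcomplete : ∀ g : ℕ → ℂ, Summable (fun j => ρ j * ‖g j‖ ^ 2) →
      (∀ n, HasSum (fun j => (ρ j : ℂ) * R n j * (starRingEnd ℂ) (g j)) 0) → g = 0)
    (𝒥 : ℕ → ℝ → ℂ) (h𝒥 : ∀ t : ℝ, Summable (fun k => ‖𝒥 k t‖ ^ 2))
    (lam : ℕ → ℂ) (hlam : ∀ n, lam n ≠ 0)
    (hinterp : ∀ k n, 𝒥 k (x n) = lam n * R k n) :
    ∃ K : ℝ → Lp ℂ 2 μ,
      (∀ t : ℝ, HasSum (fun k => (u k * 𝒥 k t) • p k) (K t)) ∧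
      (∀ n, K (x n) ≠ 0) ∧
      (∀ n m', n ≠ m' → (inner ℂ (K (x n)) (K (x m')) : ℂ) = 0) ∧
      (Submodule.span ℂ (Set.range fun n => K (x n))).topologicalClosure = ⊤ :=
  kernel_at_nodes_orthogonal_basis_general (m := m) μ p hp_orth hp_complete u hu x ρ hρ R hdual
    horth 𝒥 h𝒥 lam hlam hinterp
end

section
/- The transform F defined by (Fg)(t) := ⟨g, K(·,t)⟩_{L²(μ)} for g ∈ L²(μ) and t ∈ ℝ is injective: if ⟨g, K(·,t)⟩_{L²(μ)} = 0 for every t ∈ ℝ, then g = 0 in L²(μ). (Injectivity of the transform F of Theorem 2.) -/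
/-!
Put `c_k = u_k ⟪g, p_k⟫`, a square-summable sequence. At the nodes `t = x_n` the hypothesis reads
`λ_n Σ_k c_k R k n = 0`, so in `ℓ²` the sequence `c` is orthogonal to every column `conj R(·, n)`.
The dual orthogonality relation makes `√ρ_j • conj R(·, j)` an orthonormal family, and the
orthogonality relation says that each unit vector `e_n` equals its expansion
`Σ_j ρ_j R n j • conj R(·, j)` in this family; hence `c_n = ⟪e_n, c⟫ = 0`. Completeness of `(p_k)`
then forces `g = 0`.
-/

open scoped ComplexConjugate InnerProductSpace lp

section InnerProductSpace

variable {𝕜 E ι : Type*} [RCLike 𝕜] [NormedAddCommGroup E] [InnerProductSpace 𝕜 E]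

theorem summable_norm_sq_of_hasSum_mul_conj {f : ι → 𝕜} {a : 𝕜}
    (h : HasSum (fun i => f i * conj (f i)) a) : Summable fun i => ‖f i‖ ^ 2 := by
  simp_rw [RCLike.mul_conj, ← RCLike.ofReal_pow] at h
  exact (RCLike.summable_ofReal 𝕜).1 h.summable

theorem Orthonormal.summable_inner_smul [CompleteSpace E] {v : ι → E} (hv : Orthonormal 𝕜 v)
    (x : E) : Summable fun i => ⟪v i, x⟫_𝕜 • v i :=
  (hv.orthogonalFamily.summable_iff_norm_sq_summable _).2 (hv.inner_products_summable x)

theorem inner_eq_zero_of_hasSum_smul {v : ι → E} {c : ι → 𝕜} {y a : E}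
    (hy : HasSum (fun i => c i • v i) y) (ha : ∀ i, ⟪v i, a⟫_𝕜 = 0) : ⟪y, a⟫_𝕜 = 0 := by
  have h := hy.mapL (innerSL 𝕜 a)
  simp only [innerSL_apply_apply, inner_smul_right, inner_eq_zero_symm.1 (ha _), mul_zero] at h
  exact inner_eq_zero_symm.1 (h.unique hasSum_zero)

theorem orthonormal_sqrt_smul [DecidableEq ι] {v : ι → E} {ρ : ι → ℝ} (hρ : ∀ i, 0 < ρ i)
    (hv : ∀ i j, ⟪v i, v j⟫_𝕜 = if i = j then ((ρ i)⁻¹ : 𝕜) else 0) :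
    Orthonormal 𝕜 fun i => (√(ρ i) : 𝕜) • v i := by
  rw [orthonormal_iff_ite]
  intro i j
  rw [inner_smul_left, inner_smul_right, hv, RCLike.conj_ofReal]
  split_ifs with hij
  · subst hij
    rw [← mul_assoc, ← RCLike.ofReal_mul, Real.mul_self_sqrt (hρ i).le, ← RCLike.ofReal_inv,
      ← RCLike.ofReal_mul, mul_inv_cancel₀ (hρ i).ne', RCLike.ofReal_one]
  · simp

theorem eq_zero_of_forall_inner_eq_zero_of_dense_span [CompleteSpace E] {s : Set E}
    (hs : (Submodule.span 𝕜 s).topologicalClosure = ⊤) {x : E} (hx : ∀ v ∈ s, ⟪v, x⟫_𝕜 = 0) :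
    x = 0 := by
  have hortho : Submodule.span 𝕜 {x} ⟂ Submodule.span 𝕜 s :=
    Submodule.isOrtho_span.2 fun _ hu v hv => by
      rw [Set.mem_singleton_iff.1 hu]; exact inner_eq_zero_symm.1 (hx v hv)
  have hx_mem := hortho (Submodule.mem_span_singleton_self x)
  rwa [Submodule.topologicalClosure_eq_top_iff.1 hs, Submodule.mem_bot] at hx_mem

end InnerProductSpace

section lp

variable {α : Type*} {E : α → Type*} [∀ i, NormedAddCommGroup (E i)]

theorem memℓp_two_of_summable_norm_sq {f : ∀ i, E i} (hf : Summable fun i => ‖f i‖ ^ 2) :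
    Memℓp f 2 :=
  memℓp_gen (by simpa using hf)

theorem lp.hasSum_apply {p : ENNReal} [Fact (1 ≤ p)] {ι : Type*} {f : ι → lp E p} {S : lp E p}
    (hS : HasSum f S) (i : α) : HasSum (fun j => f j i) (S i) :=
  Pi.hasSum.1 (hS.map (lp.coeFnAddMonoidHom E p) lp.uniformContinuous_coe.continuous) i

end lp

section WeightedOrthogonality

/- Columns are conjugated so that `⟪conjColumn R hR j, c⟫ = Σ_k R k j * c k`, and the inner
products of two columns are the sums of the dual orthogonality relation. -/
def conjColumn (R : ℕ → ℕ → ℂ) (hR : ∀ j, Summable fun k => ‖R k j‖ ^ 2) (j : ℕ) :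
    ℓ²(ℕ, ℂ) :=
  ⟨fun k => conj (R k j), memℓp_two_of_summable_norm_sq (by simpa using hR j)⟩

variable {ρ : ℕ → ℝ} {R : ℕ → ℕ → ℂ} (hR : ∀ j, Summable fun k => ‖R k j‖ ^ 2)
include hR

@[simp]
theorem conjColumn_apply (j k : ℕ) : conjColumn R hR j k = conj (R k j) :=
  rfl

theorem hasSum_inner_conjColumn (c : ℓ²(ℕ, ℂ)) (j : ℕ) :
    HasSum (fun k => R k j * c k) ⟪conjColumn R hR j, c⟫_ℂ := by
  simpa [mul_comm] using lp.hasSum_inner (𝕜 := ℂ) (conjColumn R hR j) c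

variable (hρ : ∀ j, 0 < ρ j)
    (hdual : ∀ i j, HasSum (fun k => R k i * conj (R k j)) (if i = j then 1 / (ρ i : ℂ) else 0))
include hρ hdual

theorem orthonormal_sqrt_smul_conjColumn :
    Orthonormal ℂ fun j => (√(ρ j) : ℂ) • conjColumn R hR j :=
  orthonormal_sqrt_smul hρ fun i j => by
    rw [← one_div]
    exact (hasSum_inner_conjColumn hR _ i).unique (hdual i j)

theorem hasSum_smul_conjColumn_single
    (horth : ∀ n m, HasSum (fun j => (ρ j : ℂ) * R n j * conj (R m j)) (if n = m then 1 else 0))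
    (n : ℕ) :
    HasSum (fun j => ((ρ j : ℂ) * R n j) • conjColumn R hR j) (lp.single 2 n 1 : ℓ²(ℕ, ℂ)) := by
  -- The terms are `⟪w_j, e_n⟫ • w_j` for the orthonormal family `w_j = √ρ_j • conjColumn R hR j`.
  obtain ⟨S, hS⟩ : Summable fun j => ((ρ j : ℂ) * R n j) • conjColumn R hR j := by
    refine ((orthonormal_sqrt_smul_conjColumn hR hρ hdual).summable_inner_smul
      (lp.single 2 n 1 : ℓ²(ℕ, ℂ))).congr fun j => ?_
    have hsq : (√(ρ j) : ℂ) * √(ρ j) = ρ j := by exact_mod_cast Real.mul_self_sqrt (hρ j).le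
    simp only [inner_smul_left, smul_smul, lp.inner_single_right, conjColumn_apply,
      RCLike.inner_apply, Complex.conj_conj, Complex.conj_ofReal]
    congr 1
    linear_combination R n j * hsq
  convert hS
  ext k
  simp_rw [lp.single_apply, Pi.single_apply, @eq_comm _ k n]
  refine (horth n k).unique ?_
  simpa [mul_assoc] using lp.hasSum_apply hS k

end WeightedOrthogonality

theorem eq_zero_of_forall_hasSum_mul_eq_zero {ρ : ℕ → ℝ} {R : ℕ → ℕ → ℂ} (hρ : ∀ j, 0 < ρ j)
    (hdual : ∀ i j, HasSum (fun k => R k i * conj (R k j)) (if i = j then 1 / (ρ i : ℂ) else 0))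
    (horth : ∀ n m, HasSum (fun j => (ρ j : ℂ) * R n j * conj (R m j)) (if n = m then 1 else 0))
    {c : ℕ → ℂ} (hc : Summable fun k => ‖c k‖ ^ 2) (h : ∀ n, HasSum (fun k => c k * R k n) 0) :
    c = 0 := by
  have hR j := summable_norm_sq_of_hasSum_mul_conj (hdual j j)
  let a : ℓ²(ℕ, ℂ) := ⟨c, memℓp_two_of_summable_norm_sq hc⟩
  have ha j : ⟪conjColumn R hR j, a⟫_ℂ = 0 :=
    (hasSum_inner_conjColumn hR a j).unique (by simpa only [mul_comm] using h j)
  funext n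
  calc c n = ⟪(lp.single 2 n 1 : ℓ²(ℕ, ℂ)), a⟫_ℂ := by simp [lp.inner_single_left, a]
    _ = 0 := inner_eq_zero_of_hasSum_smul (hasSum_smul_conjColumn_single hR hρ hdual horth n) ha

open MeasureTheory

theorem transform_injective_general
    {m : MeasurableSpace ℝ} (μ : Measure ℝ)
    (p : ℕ → Lp ℂ 2 μ)
    (hp_orth : Orthonormal ℂ p)
    (hp_complete : (Submodule.span ℂ (Set.range p)).topologicalClosure = ⊤)
    (u : ℕ → ℂ) (hu : ∀ k, ‖u k‖ = 1)
    (x : ℕ → ℝ)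
    (ρ : ℕ → ℝ) (hρ : ∀ n, 0 < ρ n)
    (R : ℕ → ℕ → ℂ)
    (hdual : ∀ n m', HasSum (fun k => R k n * (starRingEnd ℂ) (R k m'))
      (if n = m' then 1 / (ρ n : ℂ) else 0))
    (horth : ∀ n m', HasSum (fun j => (ρ j : ℂ) * R n j * (starRingEnd ℂ) (R m' j))
      (if n = m' then 1 else 0))
    (𝒥 : ℕ → ℝ → ℂ)
    (lam : ℕ → ℂ) (hlam : ∀ n, lam n ≠ 0)
    (hinterp : ∀ k n, 𝒥 k (x n) = lam n * R k n)
    (K : ℝ → Lp ℂ 2 μ)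
    (hK : ∀ t : ℝ, HasSum (fun k => (u k * 𝒥 k t) • p k) (K t)) :
    ∀ g : Lp ℂ 2 μ, (∀ t : ℝ, (inner ℂ g (K t) : ℂ) = 0) → g = 0 := by
  intro g hg
  set c : ℕ → ℂ := fun k => u k * ⟪g, p k⟫_ℂ
  have hc : Summable fun k => ‖c k‖ ^ 2 := by
    simpa [c, hu, norm_inner_symm] using hp_orth.inner_products_summable g
  have hcR n : HasSum (fun k => c k * R k n) 0 := by
    have h := (hK (x n)).mapL (innerSL ℂ g)
    simp only [innerSL_apply_apply, inner_smul_right, hinterp, hg] at h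
    simpa [c, hlam n, mul_comm, mul_left_comm, mul_assoc] using h.mul_left (lam n)⁻¹
  have hc0 := congrFun (eq_zero_of_forall_hasSum_mul_eq_zero hρ hdual horth hc hcR)
  refine eq_zero_of_forall_inner_eq_zero_of_dense_span hp_complete ?_
  rintro _ ⟨k, rfl⟩
  have hu0 : u k ≠ 0 := norm_ne_zero_iff.1 (by simp [hu])
  exact inner_eq_zero_symm.1 ((mul_eq_zero.1 (hc0 k)).resolve_left hu0)

/-- **Injectivity of the transform `F` of Theorem 2**: with
`K(·,t) = Σ_k u_k ⬝ 𝒥 k t ⬝ p_k ∈ L²(μ)`, the transform `(Fg)(t) = ⟨g, K(·,t)⟩`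
is injective on `L²(μ)`: if `⟨g, K(·,t)⟩ = 0` for every real `t`, then `g = 0`. -/
theorem transform_injective
    {m : MeasurableSpace ℝ} (μ : Measure ℝ)
    [TopologicalSpace.SeparableSpace (Lp ℂ 2 μ)]
    (p : ℕ → Lp ℂ 2 μ)
    (hp_orth : Orthonormal ℂ p)
    (hp_complete : (Submodule.span ℂ (Set.range p)).topologicalClosure = ⊤)
    (hp_real : ∀ k, ∀ᵐ x ∂μ, ((p k : ℝ →ₘ[μ] ℂ) x).im = 0)
    (u : ℕ → ℂ) (hu : ∀ k, ‖u k‖ = 1)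
    (x : ℕ → ℝ) (hx : Function.Injective x)
    (ρ : ℕ → ℝ) (hρ : ∀ n, 0 < ρ n)
    (R : ℕ → ℕ → ℂ)
    (hdual : ∀ n m', HasSum (fun k => R k n * (starRingEnd ℂ) (R k m'))
      (if n = m' then 1 / (ρ n : ℂ) else 0))
    (horth : ∀ n m', HasSum (fun j => (ρ j : ℂ) * R n j * (starRingEnd ℂ) (R m' j))
      (if n = m' then 1 else 0))
    (hRcomplete : ∀ g : ℕ → ℂ, Summable (fun j => ρ j * ‖g j‖ ^ 2) →
      (∀ n, HasSum (fun j => (ρ j : ℂ) * R n j * (starRingEnd ℂ) (g j)) 0) → g = 0)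
    (𝒥 : ℕ → ℝ → ℂ) (h𝒥 : ∀ t : ℝ, Summable (fun k => ‖𝒥 k t‖ ^ 2))
    (lam : ℕ → ℂ) (hlam : ∀ n, lam n ≠ 0)
    (hinterp : ∀ k n, 𝒥 k (x n) = lam n * R k n)
    (K : ℝ → Lp ℂ 2 μ)
    (hK : ∀ t : ℝ, HasSum (fun k => (u k * 𝒥 k t) • p k) (K t)) :
    ∀ g : Lp ℂ 2 μ, (∀ t : ℝ, (inner ℂ g (K t) : ℂ) = 0) → g = 0 :=
  transform_injective_general (m := m) μ p hp_orth hp_complete u hu x ρ hρ R hdual horth 𝒥 lam hlam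
    hinterp K hK
end

section
/- Let u ∈ L²(μ), let f(t) := ⟨u, K(·,t)⟩_{L²(μ)} for t ∈ ℝ, and let k(t,s) := ⟨K(·,s), K(·,t)⟩_{L²(μ)}. Then k(x_n, x_n) = |λ_n|²/ρ_n > 0 for every n, and for every t ∈ ℝ the sampling series Σ_{n=0}^∞ f(x_n) · k(t, x_n)/k(x_n, x_n) converges absolutely with sum f(t). (Sampling part of Theorem 3.) -/
/-!
Expanding in the orthonormal family `p` identifies `K(·,t)` with the sequence
`W t = (u_k 𝒥_k(t))_k ∈ ℓ²`, so that `k(t,s) = ⟨W t, W s⟩` and `f(t) = ⟨W t, a⟩` with `a = T† g`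
for the isometry `T : ℓ² → L²(μ)`. By interpolation `W (x_n) = λ_n (u_k R_{kn})_k`. The dual
orthogonality relation makes these vectors orthogonal with `‖W (x_n)‖² = |λ_n|²/ρ_n`; the
orthogonality relation makes `c ↦ Σ_i c_i (√ρ_j R_{ij})_j` an isometry of `ℓ²`, hence injective,
which says exactly that they are complete. The sampling series is then Parseval's identity for
`⟨W t, a⟩` in the orthogonal basis `(W (x_n))_n`.
-/

open MeasureTheory

open scoped InnerProductSpace lp

theorem memℓp_two_iff_summable_sq {ι E : Type*} [NormedAddCommGroup E] {f : ι → E} :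
    Memℓp f 2 ↔ Summable fun i => ‖f i‖ ^ 2 := by
  rw [memℓp_gen_iff (by norm_num)]
  norm_num

theorem memℓp_mul_left_iff_of_norm_eq_one {ι 𝕜 : Type*} [NormedDivisionRing 𝕜]
    {u f : ι → 𝕜} {p : ENNReal} (hu : ∀ i, ‖u i‖ = 1) :
    Memℓp (fun i => u i * f i) p ↔ Memℓp f p := by
  have hnorm : (fun i => ‖u i * f i‖) = fun i => ‖f i‖ := funext fun i => by
    rw [norm_mul, hu, one_mul]
  rw [← memℓp_norm_iff, hnorm, memℓp_norm_iff]

theorem summable_norm_mul_of_summable_sq {ι 𝕜 : Type*} [NormedField 𝕜] {f g : ι → 𝕜}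
    (hf : Summable fun i => ‖f i‖ ^ 2) (hg : Summable fun i => ‖g i‖ ^ 2) :
    Summable fun i => ‖f i * g i‖ := by
  refine Summable.of_nonneg_of_le (fun i => norm_nonneg _) (fun i => ?_) ((hf.add hg).div_const 2)
  rw [norm_mul]
  linarith [two_mul_le_add_sq ‖f i‖ ‖g i‖]

section InnerProductSpace

variable {ι 𝕜 E : Type*} [RCLike 𝕜] [NormedAddCommGroup E] [InnerProductSpace 𝕜 E]

theorem Orthonormal.hasSum_smul_linearIsometry [CompleteSpace E] {v : ι → E}
    (hv : Orthonormal 𝕜 v) (c : ℓ²(ι, 𝕜)) :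
    HasSum (fun i => c i • v i) (hv.orthogonalFamily.linearIsometry c) :=
  hv.orthogonalFamily.hasSum_linearIsometry c

theorem Orthonormal.eq_zero_of_forall_hasSum_apply {κ : Type*} {v : ι → ℓ²(κ, 𝕜)}
    (hv : Orthonormal 𝕜 v) (c : ℓ²(ι, 𝕜)) (h : ∀ j, HasSum (fun i => c i * v i j) 0) : c = 0 := by
  have hzero : hv.orthogonalFamily.linearIsometry c = 0 := by
    ext j
    exact ((hv.hasSum_smul_linearIsometry c).mapL (lp.evalCLM 𝕜 (fun _ : κ => 𝕜) 2 j)).unique (h j)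
  exact hv.orthogonalFamily.linearIsometry.injective (hzero.trans (map_zero _).symm)

theorem orthonormal_inv_norm_smul {F : ι → E} (hF0 : ∀ i, F i ≠ 0)
    (hF : Pairwise fun i j => ⟪F i, F j⟫_𝕜 = 0) :
    Orthonormal 𝕜 fun i => (‖F i‖⁻¹ : 𝕜) • F i :=
  ⟨fun i => norm_smul_inv_norm (hF0 i), fun i j hij => by
    simp only [inner_smul_left, inner_smul_right, hF hij, mul_zero]⟩

theorem inner_smul_mul_inner_smul_div {c : 𝕜} (hc : c ≠ 0) {b : E} (hb : ‖b‖ = 1) (v a : E) :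
    ⟪c • b, a⟫_𝕜 * ⟪v, c • b⟫_𝕜 / ⟪c • b, c • b⟫_𝕜 = ⟪v, b⟫_𝕜 * ⟪b, a⟫_𝕜 := by
  have hc' : (starRingEnd 𝕜) c ≠ 0 := by simpa using hc
  simp only [inner_smul_left, inner_smul_right]
  rw [inner_self_eq_norm_sq_to_K, hb, RCLike.ofReal_one, one_pow, mul_one]
  field_simp

theorem hasSum_inner_mul_inner_div_of_orthogonal [CompleteSpace E] {F : ι → E}
    (hF0 : ∀ i, F i ≠ 0) (hF : Pairwise fun i j => ⟪F i, F j⟫_𝕜 = 0)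
    (hspan : ∀ w, (∀ i, ⟪F i, w⟫_𝕜 = 0) → w = 0) (v a : E) :
    Summable (fun i => ‖⟪F i, a⟫_𝕜 * ⟪v, F i⟫_𝕜 / ⟪F i, F i⟫_𝕜‖) ∧
      HasSum (fun i => ⟪F i, a⟫_𝕜 * ⟪v, F i⟫_𝕜 / ⟪F i, F i⟫_𝕜) ⟪v, a⟫_𝕜 := by
  have hb := orthonormal_inv_norm_smul hF0 hF
  have hbspan : (Submodule.span 𝕜 (Set.range fun i => (‖F i‖⁻¹ : 𝕜) • F i))ᗮ = ⊥ := by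
    refine (Submodule.eq_bot_iff _).2 fun w hw => hspan w fun i => ?_
    have := (Submodule.mem_orthogonal _ w).1 hw _ (Submodule.subset_span ⟨i, rfl⟩)
    simpa [inner_smul_left, hF0 i] using this
  set B := HilbertBasis.mkOfOrthogonalEqBot hb hbspan
  have hterm : ∀ i, ⟪F i, a⟫_𝕜 * ⟪v, F i⟫_𝕜 / ⟪F i, F i⟫_𝕜 = ⟪v, B i⟫_𝕜 * ⟪B i, a⟫_𝕜 := by
    intro i
    have hFi : F i = (‖F i‖ : 𝕜) • B i := by
      simp [B, smul_smul, hF0 i]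
    rw [hFi, inner_smul_mul_inner_smul_div (by simpa using hF0 i) (B.orthonormal.1 i)]
  simp only [hterm]
  refine ⟨summable_norm_mul_of_summable_sq ?_ ?_, B.hasSum_inner_mul_inner v a⟩
  · exact (B.orthonormal.inner_products_summable v).congr fun i => by rw [norm_inner_symm]
  · exact B.orthonormal.inner_products_summable a

end InnerProductSpace

namespace Sampling

variable {ρ : ℕ → ℝ} {R : ℕ → ℕ → ℂ} {u lam : ℕ → ℂ} {w : ℕ → ℓ²(ℕ, ℂ)}

open ComplexConjugate

theorem eq_zero_of_forall_hasSum_mul_eq_zero (hρ : ∀ n, 0 ≤ ρ n)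
    (horth : ∀ n m', HasSum (fun j => (ρ j : ℂ) * R n j * conj (R m' j))
      (if n = m' then 1 else 0))
    (C : ℓ²(ℕ, ℂ)) (hC : ∀ n, HasSum (fun k => C k * R k n) 0) : C = 0 := by
  have hsqrt : ∀ j, conj (√(ρ j) : ℂ) * √(ρ j) = ρ j := fun j => by
    rw [Complex.conj_ofReal, ← Complex.ofReal_mul, Real.mul_self_sqrt (hρ j)]
  have hmem : ∀ i, Memℓp (fun j => (√(ρ j) : ℂ) * R i j) 2 := by
    intro i
    refine memℓp_two_iff_summable_sq.2 (Complex.summable_ofReal.1 ((horth i i).summable.congr ?_))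
    intro j
    rw [mul_assoc, Complex.mul_conj', norm_mul, Complex.norm_real, Real.norm_of_nonneg
      (Real.sqrt_nonneg _), mul_pow, Real.sq_sqrt (hρ j)]
    push_cast
    rfl
  set Ψ : ℕ → ℓ²(ℕ, ℂ) := fun i => ⟨_, hmem i⟩
  have hΨ : Orthonormal ℂ Ψ := by
    refine orthonormal_iff_ite.2 fun i j => (lp.hasSum_inner (Ψ i) (Ψ j)).unique ?_
    have hterm : ∀ k, star ((ρ k : ℂ) * R i k * conj (R j k)) = ⟪Ψ i k, Ψ j k⟫_ℂ := by
      intro k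
      rw [RCLike.inner_apply']
      change _ = conj ((√(ρ k) : ℂ) * R i k) * ((√(ρ k) : ℂ) * R j k)
      rw [← hsqrt k]
      simp only [Complex.star_def, map_mul, Complex.conj_conj]
      ring
    have hval : star (if i = j then (1 : ℂ) else 0) = if i = j then 1 else 0 := by
      split_ifs <;> simp
    rw [← funext hterm, ← hval]
    exact (horth i j).star
  refine hΨ.eq_zero_of_forall_hasSum_apply C fun j => ?_
  simpa [Ψ, mul_left_comm] using (hC j).mul_left (√(ρ j) : ℂ)

theorem inner_eq_ite (hu : ∀ k, ‖u k‖ = 1)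
    (hdual : ∀ n m', HasSum (fun k => R k n * conj (R k m'))
      (if n = m' then 1 / (ρ n : ℂ) else 0))
    (hw : ∀ n k, w n k = u k * (lam n * R k n)) (i j : ℕ) :
    ⟪w i, w j⟫_ℂ = if i = j then ((‖lam i‖ ^ 2 / ρ i : ℝ) : ℂ) else 0 := by
  have hunit : ∀ k, conj (u k) * u k = 1 := fun k => by
    rw [Complex.conj_mul', hu k]
    norm_num
  have hterm : ∀ k, ⟪w i k, w j k⟫_ℂ = conj (lam i) * lam j * (R k j * conj (R k i)) := by
    intro k
    rw [hw, hw, RCLike.inner_apply', map_mul, map_mul]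
    linear_combination (conj (lam i) * conj (R k i) * lam j * R k j) * hunit k
  have hval : (if i = j then ((‖lam i‖ ^ 2 / ρ i : ℝ) : ℂ) else 0)
      = conj (lam i) * lam j * if j = i then 1 / (ρ j : ℂ) else 0 := by
    rcases eq_or_ne i j with rfl | h
    · rw [if_pos rfl, if_pos rfl, Complex.conj_mul', Complex.ofReal_div, Complex.ofReal_pow]
      ring
    · rw [if_neg h, if_neg h.symm, mul_zero]
  rw [hval]
  refine (lp.hasSum_inner (w i) (w j)).unique ?_
  rw [funext hterm]
  exact (hdual j i).mul_left _

theorem eq_zero_of_forall_inner_eq_zero (hρ : ∀ n, 0 ≤ ρ n)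
    (horth : ∀ n m', HasSum (fun j => (ρ j : ℂ) * R n j * conj (R m' j))
      (if n = m' then 1 else 0))
    (hu : ∀ k, ‖u k‖ = 1) (hlam : ∀ n, lam n ≠ 0) (hw : ∀ n k, w n k = u k * (lam n * R k n))
    (v : ℓ²(ℕ, ℂ)) (hv : ∀ n, ⟪w n, v⟫_ℂ = 0) : v = 0 := by
  have hmem : Memℓp (fun k => u k * conj (v k)) 2 :=
    (memℓp_mul_left_iff_of_norm_eq_one hu).2 (lp.memℓp v).star_mem
  have hC := eq_zero_of_forall_hasSum_mul_eq_zero hρ horth ⟨_, hmem⟩ fun n => by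
    have hterm : ∀ k, (lam n)⁻¹ * star ⟪w n k, v k⟫_ℂ = u k * conj (v k) * R k n := by
      intro k
      simp only [RCLike.inner_apply', hw, Complex.star_def, map_mul, Complex.conj_conj]
      field_simp [hlam n]
    have := ((hv n ▸ lp.hasSum_inner (w n) v).star).mul_left (lam n)⁻¹
    rwa [funext hterm, star_zero, mul_zero] at this
  ext k
  have := congrArg (fun C : ℓ²(ℕ, ℂ) => C k) hC
  simpa [(norm_pos_iff.1 ((hu k).symm ▸ one_pos) : u k ≠ 0)] using this

end Sampling

theorem sampling_expansion_general
    {m : MeasurableSpace ℝ} (μ : Measure ℝ)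
    (p : ℕ → Lp ℂ 2 μ)
    (hp_orth : Orthonormal ℂ p)
    (u : ℕ → ℂ) (hu : ∀ k, ‖u k‖ = 1)
    (x : ℕ → ℝ)
    (ρ : ℕ → ℝ) (hρ : ∀ n, 0 < ρ n)
    (R : ℕ → ℕ → ℂ)
    (hdual : ∀ n m', HasSum (fun k => R k n * (starRingEnd ℂ) (R k m'))
      (if n = m' then 1 / (ρ n : ℂ) else 0))
    (horth : ∀ n m', HasSum (fun j => (ρ j : ℂ) * R n j * (starRingEnd ℂ) (R m' j))
      (if n = m' then 1 else 0))
    (𝒥 : ℕ → ℝ → ℂ) (h𝒥 : ∀ t : ℝ, Summable (fun k => ‖𝒥 k t‖ ^ 2))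
    (lam : ℕ → ℂ) (hlam : ∀ n, lam n ≠ 0)
    (hinterp : ∀ k n, 𝒥 k (x n) = lam n * R k n)
    (K : ℝ → Lp ℂ 2 μ)
    (hK : ∀ t : ℝ, HasSum (fun k => (u k * 𝒥 k t) • p k) (K t))
    (g : Lp ℂ 2 μ)
    -- `f t = ⟨g, K(·,t)⟩ = ∫ g ⬝ conj (K(·,t)) dμ`, in Mathlib's convention:
    (f : ℝ → ℂ) (hf : ∀ t, f t = (inner ℂ (K t) g : ℂ))
    -- `k t s = ⟨K(·,s), K(·,t)⟩ = ∫ K(·,s) ⬝ conj (K(·,t)) dμ`: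
    (k : ℝ → ℝ → ℂ) (hk : ∀ t s, k t s = (inner ℂ (K t) (K s) : ℂ)) :
    (∀ n, k (x n) (x n) = ((‖lam n‖ ^ 2 / ρ n : ℝ) : ℂ) ∧
      0 < ‖lam n‖ ^ 2 / ρ n) ∧
    (∀ t : ℝ,
      Summable (fun n => ‖f (x n) * k t (x n) / k (x n) (x n)‖) ∧
      HasSum (fun n => f (x n) * k t (x n) / k (x n) (x n)) (f t)) := by
  set T := hp_orth.orthogonalFamily.linearIsometry
  set W : ℝ → ℓ²(ℕ, ℂ) := fun t => ⟨fun j => u j * 𝒥 j t,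
    (memℓp_mul_left_iff_of_norm_eq_one hu).2 (memℓp_two_iff_summable_sq.2 (h𝒥 t))⟩
  have hKW : ∀ t, K t = T (W t) := fun t =>
    (hK t).unique (hp_orth.hasSum_smul_linearIsometry (W t))
  have hfW : ∀ t, f t = ⟪W t, T.toContinuousLinearMap.adjoint g⟫_ℂ := fun t => by
    rw [hf, hKW, ContinuousLinearMap.adjoint_inner_right]
    rfl
  have hkW : ∀ t s, k t s = ⟪W t, W s⟫_ℂ := fun t s => by
    rw [hk, hKW, hKW, T.inner_map_map]
  have hWx : ∀ n j, W (x n) j = u j * (lam n * R j n) := fun n j =>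
    congrArg (u j * ·) (hinterp j n)
  have hgram := Sampling.inner_eq_ite hu hdual hWx
  have hpos : ∀ n, 0 < ‖lam n‖ ^ 2 / ρ n := fun n =>
    div_pos (pow_pos (norm_pos_iff.2 (hlam n)) 2) (hρ n)
  have hW0 : ∀ n, W (x n) ≠ 0 := fun n hn => by
    have := hgram n n
    rw [hn, inner_zero_left, if_pos rfl, eq_comm, Complex.ofReal_eq_zero] at this
    exact (hpos n).ne' this
  refine ⟨fun n => ⟨by rw [hkW, hgram, if_pos rfl], hpos n⟩, fun t => ?_⟩
  simp only [hfW, hkW]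
  exact hasSum_inner_mul_inner_div_of_orthogonal hW0
    (fun i j hij => (hgram i j).trans (if_neg hij))
    (Sampling.eq_zero_of_forall_inner_eq_zero (fun n => (hρ n).le) horth hu hlam hWx) _ _

/-- **Sampling part of Theorem 3**: with `f(t) = ⟨g, K(·,t)⟩` and
`k(t,s) = ⟨K(·,s), K(·,t)⟩` (inner products of `L²(μ)`, conjugation on the second
factor as in the paper), one has `k(x_n, x_n) = |λ_n|²/ρ_n > 0`, and for every
real `t` the sampling series `Σ_n f(x_n) k(t,x_n)/k(x_n,x_n)` converges
absolutely with sum `f(t)`. -/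
theorem sampling_expansion
    {m : MeasurableSpace ℝ} (μ : Measure ℝ)
    [TopologicalSpace.SeparableSpace (Lp ℂ 2 μ)]
    (p : ℕ → Lp ℂ 2 μ)
    (hp_orth : Orthonormal ℂ p)
    (hp_complete : (Submodule.span ℂ (Set.range p)).topologicalClosure = ⊤)
    (hp_real : ∀ k, ∀ᵐ x ∂μ, ((p k : ℝ →ₘ[μ] ℂ) x).im = 0)
    (u : ℕ → ℂ) (hu : ∀ k, ‖u k‖ = 1)
    (x : ℕ → ℝ) (hx : Function.Injective x)
    (ρ : ℕ → ℝ) (hρ : ∀ n, 0 < ρ n)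
    (R : ℕ → ℕ → ℂ)
    (hdual : ∀ n m', HasSum (fun k => R k n * (starRingEnd ℂ) (R k m'))
      (if n = m' then 1 / (ρ n : ℂ) else 0))
    (horth : ∀ n m', HasSum (fun j => (ρ j : ℂ) * R n j * (starRingEnd ℂ) (R m' j))
      (if n = m' then 1 else 0))
    (hRcomplete : ∀ g : ℕ → ℂ, Summable (fun j => ρ j * ‖g j‖ ^ 2) →
      (∀ n, HasSum (fun j => (ρ j : ℂ) * R n j * (starRingEnd ℂ) (g j)) 0) → g = 0)
    (𝒥 : ℕ → ℝ → ℂ) (h𝒥 : ∀ t : ℝ, Summable (fun k => ‖𝒥 k t‖ ^ 2))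
    (lam : ℕ → ℂ) (hlam : ∀ n, lam n ≠ 0)
    (hinterp : ∀ k n, 𝒥 k (x n) = lam n * R k n)
    (K : ℝ → Lp ℂ 2 μ)
    (hK : ∀ t : ℝ, HasSum (fun k => (u k * 𝒥 k t) • p k) (K t))
    (g : Lp ℂ 2 μ)
    -- `f t = ⟨g, K(·,t)⟩ = ∫ g ⬝ conj (K(·,t)) dμ`, in Mathlib's convention:
    (f : ℝ → ℂ) (hf : ∀ t, f t = (inner ℂ (K t) g : ℂ))
    -- `k t s = ⟨K(·,s), K(·,t)⟩ = ∫ K(·,s) ⬝ conj (K(·,t)) dμ`: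
    (k : ℝ → ℝ → ℂ) (hk : ∀ t s, k t s = (inner ℂ (K t) (K s) : ℂ)) :
    (∀ n, k (x n) (x n) = ((‖lam n‖ ^ 2 / ρ n : ℝ) : ℂ) ∧
      0 < ‖lam n‖ ^ 2 / ρ n) ∧
    (∀ t : ℝ,
      Summable (fun n => ‖f (x n) * k t (x n) / k (x n) (x n)‖) ∧
      HasSum (fun n => f (x n) * k t (x n) / k (x n) (x n)) (f t)) :=
  sampling_expansion_general (m := m) μ p hp_orth u hu x ρ hρ R hdual horth 𝒥 h𝒥 lam hlam hinterp K
    hK g f hf k hk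
end

section
/- For every n ≥ 1 and every x ≠ 0, (∏_{j=0}^{n−1} C_j) · G_{n+1}(x) = G_1(x) · f_n^{(0)}(1/x) − G_0(x) · f_{n−1}^{(1)}(1/x). Consequently, if all C_j are nonzero and x₀ ≠ 0 satisfies G_1(x₀) = 0, then G_{n+1}(x₀) = −(G_0(x₀)/∏_{j=0}^{n−1} C_j) · f_{n−1}^{(1)}(1/x₀) for every n ≥ 1 (the general interpolation property of Section 5, extending the Bessel–Lommel relation). -/
/-!
Multiplying the contiguous relation at index `n` by `∏_{j<n} C_j` shows that
`P_n = (∏_{j<n} C_j) G_{n+1}(x)` obeys the three-term recurrence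
`u_{n+1} = B_n y u_n − C_{n−1} u_{n−1}` with `y = 1/x`, which is also the recurrence of
`f_n^{(0)}(y)` and of `f_{n−1}^{(1)}(y)`. Both sides of the identity therefore solve the same
second-order recurrence for `n ≥ 1`, and they agree at `n = 1, 2`.
-/

/-- The generalized Lommel polynomials `f_n^{(m)}` of Section 5:
`f_0^{(m)}(y) = 1`, `f_1^{(m)}(y) = B_m y`, and
`f_{n+1}^{(m)}(y) = B_{n+m} y f_n^{(m)}(y) − C_{n+m−1} f_{n−1}^{(m)}(y)` for `n ≥ 1`. -/
noncomputable def genLommel (B C : ℕ → ℂ) (m : ℕ) : ℕ → ℂ → ℂ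
  | 0, _ => 1
  | 1, y => B m * y
  | (n + 2), y =>
      B (m + n + 1) * y * genLommel B C m (n + 1) y - C (m + n) * genLommel B C m n y

theorem eq_of_second_order_recurrence {α : Type*} {u v : ℕ → α} (F : ℕ → α → α → α)
    (hu : ∀ n, u (n + 2) = F n (u (n + 1)) (u n))
    (hv : ∀ n, v (n + 2) = F n (v (n + 1)) (v n))
    (h0 : u 0 = v 0) (h1 : u 1 = v 1) : u = v := by
  funext n
  induction n using Nat.twoStepInduction with
  | zero => exact h0
  | one => exact h1
  | more n ihn ihn1 => rw [hu, hv, ihn, ihn1]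

section

variable (B C : ℕ → ℂ)

theorem genLommel_zero_add_three (n : ℕ) (y : ℂ) :
    genLommel B C 0 (n + 3) y =
      B (n + 2) * y * genLommel B C 0 (n + 2) y - C (n + 1) * genLommel B C 0 (n + 1) y := by
  simp only [genLommel, zero_add]

theorem genLommel_one_add_two (n : ℕ) (y : ℂ) :
    genLommel B C 1 (n + 2) y =
      B (n + 2) * y * genLommel B C 1 (n + 1) y - C (n + 1) * genLommel B C 1 n y := by
  rw [genLommel, add_comm 1 n]

variable {B C} {G : ℕ → ℝ → ℂ}

theorem prod_mul_contiguous_add_four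
    (hG : ∀ m : ℕ, ∀ x : ℝ, x ≠ 0 →
      C m * G (m + 2) x = (B m / (x : ℂ)) * G (m + 1) x - G m x)
    (n : ℕ) {x : ℝ} (hx : x ≠ 0) :
    (∏ j ∈ Finset.range (n + 3), C j) * G (n + 4) x =
      B (n + 2) * (1 / (x : ℂ)) * ((∏ j ∈ Finset.range (n + 2), C j) * G (n + 3) x) -
        C (n + 1) * ((∏ j ∈ Finset.range (n + 1), C j) * G (n + 2) x) := by
  simp only [Finset.prod_range_succ]
  linear_combination (∏ j ∈ Finset.range n, C j) * C n * C (n + 1) * hG (n + 2) x hx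

theorem prod_mul_contiguous_eq_genLommel
    (hG : ∀ m : ℕ, ∀ x : ℝ, x ≠ 0 →
      C m * G (m + 2) x = (B m / (x : ℂ)) * G (m + 1) x - G m x)
    {x : ℝ} (hx : x ≠ 0) (n : ℕ) :
    (∏ j ∈ Finset.range (n + 1), C j) * G (n + 2) x =
      G 1 x * genLommel B C 0 (n + 1) (1 / (x : ℂ)) -
        G 0 x * genLommel B C 1 n (1 / (x : ℂ)) := by
  set y : ℂ := 1 / (x : ℂ)
  have key := eq_of_second_order_recurrence (fun n p q => B (n + 2) * y * p - C (n + 1) * q)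
    (u := fun n => (∏ j ∈ Finset.range (n + 1), C j) * G (n + 2) x)
    (v := fun n => G 1 x * genLommel B C 0 (n + 1) y - G 0 x * genLommel B C 1 n y)
    (fun n => prod_mul_contiguous_add_four hG n hx)
    (fun n => by
      simp only [genLommel_zero_add_three, genLommel_one_add_two]
      ring)
    (by
      simp only [zero_add, Finset.prod_range_one, genLommel]
      linear_combination hG 0 x hx)
    (by
      simp only [Finset.prod_range_succ, Finset.prod_range_zero, genLommel]
      linear_combination C 0 * hG 1 x hx + B 1 / (x : ℂ) * hG 0 x hx)
  exact congrFun key n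

end

/-- **The general interpolation property of Section 5** (extending the
Bessel–Lommel relation): if the functions `G_m` satisfy the contiguous relation
`C_m G_{m+2}(x) = (B_m/x) G_{m+1}(x) − G_m(x)` for `x ≠ 0`, then for every `n ≥ 1`
and `x ≠ 0`,
`(∏_{j<n} C_j) G_{n+1}(x) = G_1(x) f_n^{(0)}(1/x) − G_0(x) f_{n−1}^{(1)}(1/x)`;
consequently, if all `C_j` are nonzero and `G_1(x₀) = 0` with `x₀ ≠ 0`, then
`G_{n+1}(x₀) = −(G_0(x₀)/∏_{j<n} C_j) f_{n−1}^{(1)}(1/x₀)` for every `n ≥ 1`. -/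
theorem general_interpolation_property (B C : ℕ → ℂ) (G : ℕ → ℝ → ℂ)
    (hG : ∀ m : ℕ, ∀ x : ℝ, x ≠ 0 →
      C m * G (m + 2) x = (B m / (x : ℂ)) * G (m + 1) x - G m x) :
    (∀ n : ℕ, 1 ≤ n → ∀ x : ℝ, x ≠ 0 →
      (∏ j ∈ Finset.range n, C j) * G (n + 1) x =
        G 1 x * genLommel B C 0 n (1 / (x : ℂ)) -
          G 0 x * genLommel B C 1 (n - 1) (1 / (x : ℂ))) ∧
    ((∀ j, C j ≠ 0) → ∀ x₀ : ℝ, x₀ ≠ 0 → G 1 x₀ = 0 → ∀ n : ℕ, 1 ≤ n →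
      G (n + 1) x₀ = -(G 0 x₀ / ∏ j ∈ Finset.range n, C j) *
        genLommel B C 1 (n - 1) (1 / (x₀ : ℂ))) := by
  refine ⟨fun n hn x hx => ?_, fun hC x₀ hx₀ hG1 n hn => ?_⟩ <;>
    obtain ⟨k, rfl⟩ := Nat.exists_eq_add_of_le' hn
  · exact prod_mul_contiguous_eq_genLommel hG hx k
  · have hprod : (∏ j ∈ Finset.range (k + 1), C j) ≠ 0 :=
      Finset.prod_ne_zero_iff.mpr fun j _ => hC j
    have h := prod_mul_contiguous_eq_genLommel hG hx₀ k
    rw [hG1, zero_mul, zero_sub] at h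
    rw [Nat.add_sub_cancel]
    field_simp
    linear_combination h
end
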